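/- Let p,q ∈ S² be distinct, non-antipodal points and let 0 < D < 2π. The spherical ellipse E = {x ∈ S² : d_s(p,x) + d_s(x,q) ≤ D} with foci p,q is spherically convex if and only if D < π. Furthermore, if D = π, then E is the closed hemisphere centered at the midpoint m of the segment [p,q]_s. -/

import Mathlib

open Real Set MeasureTheory Metric Filter
open scoped RealInnerProductSpace ENNReal Topology

noncomputable section

/-- Euclidean 3-space; the unit sphere `S²` is `Metric.sphere (0 : E3) 1`. -/
abbrev E3 : Type := EuclideanSpace ℝ (Fin 3)

/-- The spherical distance `d_s(x,y) = arccos ⟨x,y⟩`. -/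
def sphDist (x y : E3) : ℝ := Real.arccos ⟪x, y⟫

/-- The shorter great-circle arc (spherical segment) joining two non-antipodal
unit vectors: the radial projection of the Euclidean segment-cone. -/
def sphSeg (x y : E3) : Set E3 :=
  {z | ∃ a b : ℝ, 0 ≤ a ∧ 0 ≤ b ∧ a • x + b • y ≠ 0 ∧
      z = ‖a • x + b • y‖⁻¹ • (a • x + b • y)}

/-- A set is spherically convex if it consists of unit vectors, is contained in an
open hemisphere, and contains the shorter arc joining any two of its (non-antipodal)
points. -/
def SphConvex (K : Set E3) : Prop :=
  K ⊆ sphere (0 : E3) 1 ∧ (∃ e : E3, ‖e‖ = 1 ∧ ∀ x ∈ K, 0 < ⟪e, x⟫) ∧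
    ∀ x ∈ K, ∀ y ∈ K, x ≠ -y → sphSeg x y ⊆ K

/-- Relative interior of a subset of the sphere (interior within the sphere). -/
def relInt (K : Set E3) : Set E3 :=
  {x | ∃ ε : ℝ, 0 < ε ∧ sphere (0 : E3) 1 ∩ ball x ε ⊆ K}

/-- A spherical convex body: compact, spherically convex, with nonempty
(relative) interior. -/
def SphBody (K : Set E3) : Prop :=
  IsCompact K ∧ SphConvex K ∧ (K ∩ relInt K).Nonempty

/-- Relative boundary of a subset of the sphere. -/
def relFrontier (K : Set E3) : Set E3 := K \ relInt K

/-- Perimeter: 1-dimensional Hausdorff measure of the (relative) boundary. -/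
def sphPerim (K : Set E3) : ℝ≥0∞ := μH[1] (relFrontier K)

/-- Spherical diameter: supremum of pairwise spherical distances. -/
def sphDiam (X : Set E3) : ℝ := sSup {d | ∃ x ∈ X, ∃ y ∈ X, d = sphDist x y}

/-- The point of `S²` with latitude `θ` (signed distance from the great circle `L`
in the `(x,y)`-plane) and longitude `φ` (signed distance along a distance curve from
the half great circle `H` in the `(x,z)`-plane). -/
def sphPt (θ φ : ℝ) : E3 :=
  (WithLp.equiv 2 (Fin 3 → ℝ)).symm
    ![Real.cos θ * Real.cos φ, Real.cos θ * Real.sin φ, Real.sin θ]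

/-- The center `c = (1,0,0)` of the fixed open hemisphere `S`. -/
def ce : E3 := sphPt 0 0

/-- The fixed open hemisphere `S` centered at `c = (1,0,0)`. -/
def hemi : Set E3 := {p ∈ sphere (0 : E3) 1 | 0 < p 0}

/-- The distance curve `C_θ ⊆ S` with axis `L` at signed spherical distance `θ`
from `L`; `C_0 = L`. -/
def distCurve (θ : ℝ) : Set E3 := {p | ∃ φ ∈ Ioo (-(π/2)) (π/2), p = sphPt θ φ}

/-- The set of longitudes `φ` at which the distance curve `C_θ` meets `K`. -/
def sliceSet (K : Set E3) (θ : ℝ) : Set ℝ :=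
  {φ | φ ∈ Ioo (-(π/2)) (π/2) ∧ sphPt θ φ ∈ K}

/-- The spherical Steiner symmetral `σ_{L,H}(K)` with respect to the standard pair
`(L,H)`: on each distance curve `C_θ` meeting `K`, the arc `K ∩ C_θ` is replaced by
the closed subarc of `C_θ` of the same (angular) length centered at `C_θ ∩ H`
(the point of longitude `0`). -/
def steiner (K : Set E3) : Set E3 :=
  {p | ∃ θ ∈ Ioo (-(π/2)) (π/2), ∃ φ : ℝ, p = sphPt θ φ ∧ (sliceSet K θ).Nonempty ∧
      |φ| ≤ (sSup (sliceSet K θ) - sInf (sliceSet K θ)) / 2}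

/-- The connectedness property: `K ∩ C` is connected (possibly empty or a point)
for every distance curve `C` with axis `L`. -/
def ConnProp (K : Set E3) : Prop := ∀ θ : ℝ, IsPreconnected (K ∩ distCurve θ)

/-- Angular length of the arc `K ∩ C_θ` (zero if the arc is empty or a point). -/
def angLen (K : Set E3) (θ : ℝ) : ℝ := sSup (sliceSet K θ) - sInf (sliceSet K θ)

/-- The monotonicity part of the angular monotonicity property: the angular length
of `K ∩ C_θ` is nonincreasing for `θ ≥ 0` and nondecreasing for `θ ≤ 0`. -/
def AngMonoLen (K : Set E3) : Prop :=
  (∀ θ₁ θ₂ : ℝ, 0 ≤ θ₁ → θ₁ ≤ θ₂ → angLen K θ₂ ≤ angLen K θ₁) ∧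
  (∀ θ₁ θ₂ : ℝ, θ₁ ≤ θ₂ → θ₂ ≤ 0 → angLen K θ₁ ≤ angLen K θ₂)

/-- The angular monotonicity property (including the connectedness of all the
arcs `K ∩ C_θ`). -/
def AngMono (K : Set E3) : Prop := ConnProp K ∧ AngMonoLen K

/-- `K` is symmetric with respect to the spherical point reflection in `c`. -/
def cSymm (K : Set E3) : Prop := ∀ x ∈ K, (2 * ⟪x, ce⟫) • ce - x ∈ K

/-- The closed spherical cap (ball) of radius `r` centered at `x`. -/
def cap (x : E3) (r : ℝ) : Set E3 := {y ∈ sphere (0 : E3) 1 | sphDist x y ≤ r}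

/-- Rotation of `S²` around the axis through `c = (1,0,0)` by angle `α`. -/
def rotc (α : ℝ) (p : E3) : E3 :=
  (WithLp.equiv 2 (Fin 3 → ℝ)).symm
    ![p 0, Real.cos α * p 1 - Real.sin α * p 2, Real.sin α * p 1 + Real.cos α * p 2]

/-- The Steiner symmetrization `σ_{L',H'}` with `L' ∩ H' = {c}`, where `(L',H')`
is the standard pair `(L,H)` rotated around `c` by angle `α`. -/
def steinerAt (α : ℝ) (K : Set E3) : Set E3 := rotc α '' steiner (rotc (-α) '' K)

/-- The general Steiner symmetrization on `S²` with respect to the frame obtained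
from the standard one by the orthogonal map `g`. -/
def steinerG (g : E3 ≃ₗᵢ[ℝ] E3) (K : Set E3) : Set E3 := ⇑g '' steiner (⇑g.symm '' K)

/-- The result of applying a finite sequence of Steiner symmetrizations to `K`. -/
def steinerSeq : Set E3 → List (E3 ≃ₗᵢ[ℝ] E3) → Set E3
  | K, [] => K
  | K, g :: gs => steinerSeq (steinerG g K) gs

/-- A finite sequence of Steiner symmetrizations is applicable to `K`: at each step
the current set lies in the open hemisphere centered at the intersection point of the
current axes and satisfies the angular monotonicity property with respect to the
current symmetrization. -/
def Applicable : Set E3 → List (E3 ≃ₗᵢ[ℝ] E3) → Prop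
  | _, [] => True
  | K, g :: gs => (⇑g.symm '' K ⊆ hemi ∧ AngMono (⇑g.symm '' K)) ∧ Applicable (steinerG g K) gs

/-- The spherical convex hull: intersection of all spherically convex sets
containing the given set. -/
def sphConvexHull (A : Set E3) : Set E3 := ⋂₀ {C | SphConvex C ∧ A ⊆ C}

/-- `P` is a spherically convex polygon with at most `N` vertices: the spherical
convex hull of at most `N` unit vectors contained in an open hemisphere. -/
def IsPolyN (N : ℕ) (P : Set E3) : Prop :=
  ∃ V : Finset E3, V.card ≤ N ∧ (V : Set E3) ⊆ sphere (0 : E3) 1 ∧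
    (∃ e : E3, ‖e‖ = 1 ∧ ∀ v ∈ V, 0 < ⟪e, v⟫) ∧ P = sphConvexHull (V : Set E3)

/-- `A_N(X)`: supremum of the areas of spherically convex polygons with at most `N`
vertices contained in `X`. -/
def AN (N : ℕ) (X : Set E3) : ℝ≥0∞ :=
  ⨆ (P : Set E3) (_ : IsPolyN N P ∧ P ⊆ X), μH[2] P

/-- First moment (vector-valued integral) of a subset of the sphere. -/
def sphMoment (A : Set E3) : E3 := ∫ u in A, u ∂μH[2]

/-- The spherical centroid `g_s(A)`: the normalized first moment. -/
def sphCentroid (A : Set E3) : E3 := ‖sphMoment A‖⁻¹ • sphMoment A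

/-! For `0 < D < π` and unit vectors, the condition `d(p,z) + d(z,q) ≤ D` is equivalent to
`cos (D - d(p,z)) ≤ cos d(q,z)` together with the same inequality with `p` and `q` exchanged.
Since `sin d(p,z) = ‖z - ⟨p,z⟩ p‖`, each of these reads `0 ≤ G z` with
`G z = ⟨q,z⟩ - cos D ⟨p,z⟩ - sin D ‖z - ⟨p,z⟩ p‖`, a function that is positively homogeneous
and, because `sin D ≥ 0`, superadditive on all of `ℝ³`; so the ellipse is the trace on the
sphere of a convex cone, and it lies in the open hemisphere centered at `p + q`
since `d(p,x) + d(x,q) < π` forces `⟨p + q, x⟩ > 0`. For `D ≥ π` the ellipse contains the closed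
hemisphere `⟨p + q, x⟩ ≥ 0`, where `d(p,x) + d(x,q) ≤ π`, and with it a pair of antipodal
points. -/

namespace Real

lemma add_pos_of_arccos_add_arccos_lt_pi {u v : ℝ} (h : arccos u + arccos v < π) :
    0 < u + v := by
  by_contra! huv
  have := arccos_le_arccos (show v ≤ -u by linarith)
  rw [arccos_neg] at this
  linarith

lemma arccos_add_arccos_le_pi_iff {u v : ℝ} (hu : u ∈ Icc (-1) 1) (hv : v ∈ Icc (-1) 1) :
    arccos u + arccos v ≤ π ↔ 0 ≤ u + v := by
  have hnu : -u ∈ Icc (-1) 1 := ⟨by linarith [hu.2], by linarith [hu.1]⟩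
  rw [← le_sub_iff_add_le', ← arccos_neg, strictAntiOn_arccos.le_iff_ge hv hnu,
    neg_le_iff_add_nonneg']

end Real

lemma add_le_iff_le_abs_sub {A B D : ℝ} (hA : 0 ≤ A) (hB : 0 ≤ B) (hD : 0 < D) :
    A + B ≤ D ↔ B ≤ |D - A| ∧ A ≤ |D - B| := by
  refine ⟨fun h => ⟨le_abs.2 (.inl (by linarith)), le_abs.2 (.inl (by linarith))⟩,
    fun ⟨h₁, h₂⟩ => ?_⟩
  rcases abs_cases (D - A) with ⟨h, _⟩ | ⟨h, _⟩ <;>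
    rcases abs_cases (D - B) with ⟨h', _⟩ | ⟨h', _⟩ <;> linarith

section InnerProductSpace

variable {F : Type*} [NormedAddCommGroup F] [InnerProductSpace ℝ F]

lemma norm_sub_inner_smul_eq_sqrt {p z : F} (hp : ‖p‖ = 1) (hz : ‖z‖ = 1) :
    ‖z - ⟪p, z⟫ • p‖ = √(1 - ⟪p, z⟫ ^ 2) := by
  rw [← Real.sqrt_sq (norm_nonneg _), ← real_inner_self_eq_norm_sq]
  congr 1
  simp only [inner_sub_left, inner_sub_right, real_inner_smul_left, real_inner_smul_right,
    real_inner_self_eq_norm_sq, norm_smul, Real.norm_eq_abs, hp, hz, mul_one, sq_abs,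
    real_inner_comm p z]
  ring

lemma exists_norm_eq_one_forall_inner_pos [Nontrivial F] {K : Set F} {v : F}
    (hv : ∀ x ∈ K, 0 < ⟪v, x⟫) : ∃ e : F, ‖e‖ = 1 ∧ ∀ x ∈ K, 0 < ⟪e, x⟫ := by
  rcases eq_or_ne v 0 with rfl | hv0
  · obtain ⟨e, he⟩ := exists_norm_eq F zero_le_one
    exact ⟨e, he, fun x hx => by simpa using hv x hx⟩
  · refine ⟨‖v‖⁻¹ • v, by simp [norm_smul, hv0], fun x hx => ?_⟩
    rw [real_inner_smul_left]
    exact mul_pos (by positivity) (hv x hx)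

lemma exists_norm_eq_one_inner_eq_zero [FiniteDimensional ℝ F] (h : 1 < Module.finrank ℝ F)
    (v : F) : ∃ x : F, ‖x‖ = 1 ∧ ⟪v, x⟫ = 0 := by
  have : Nontrivial (ℝ ∙ v)ᗮ := by
    apply Module.nontrivial_of_finrank_pos (R := ℝ)
    have hspan : Module.finrank ℝ (ℝ ∙ v) ≤ 1 := (finrank_span_le_card {v}).trans (by simp)
    have := (ℝ ∙ v).finrank_add_finrank_orthogonal
    omega
  obtain ⟨x, hx⟩ := exists_norm_eq (ℝ ∙ v)ᗮ zero_le_one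
  exact ⟨x, by simpa using hx, Submodule.mem_orthogonal_singleton_iff_inner_right.mp x.2⟩

lemma inner_inv_norm_smul_nonneg_iff {x v : F} : 0 ≤ ⟪x, ‖v‖⁻¹ • v⟫ ↔ 0 ≤ ⟪v, x⟫ := by
  rcases eq_or_ne v 0 with rfl | hv0
  · simp
  · rw [real_inner_smul_right, real_inner_comm, mul_nonneg_iff_of_pos_left (by positivity)]

def ellipseFn (p q : F) (D : ℝ) (z : F) : ℝ :=
  ⟪q, z⟫ - (Real.cos D * ⟪p, z⟫ + Real.sin D * ‖z - ⟪p, z⟫ • p‖)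

lemma ellipseFn_smul (p q : F) (D : ℝ) {c : ℝ} (hc : 0 ≤ c) (z : F) :
    ellipseFn p q D (c • z) = c * ellipseFn p q D z := by
  have : c • z - ⟪p, c • z⟫ • p = c • (z - ⟪p, z⟫ • p) := by
    rw [real_inner_smul_right]; module
  rw [ellipseFn, ellipseFn, this, norm_smul, real_inner_smul_right, real_inner_smul_right,
    Real.norm_of_nonneg hc]
  ring

lemma ellipseFn_add_le (p q : F) {D : ℝ} (hD : 0 ≤ Real.sin D) (x y : F) :
    ellipseFn p q D x + ellipseFn p q D y ≤ ellipseFn p q D (x + y) := by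
  have hn : ‖x + y - ⟪p, x + y⟫ • p‖ ≤ ‖x - ⟪p, x⟫ • p‖ + ‖y - ⟪p, y⟫ • p‖ := by
    rw [show x + y - ⟪p, x + y⟫ • p = (x - ⟪p, x⟫ • p) + (y - ⟪p, y⟫ • p) by
      rw [inner_add_right]; module]
    exact norm_add_le _ _
  have := mul_le_mul_of_nonneg_left hn hD
  simp only [ellipseFn, inner_add_right] at this ⊢
  linarith

def ellipseCone (p q : F) (D : ℝ) : Set F :=
  {z | 0 ≤ ellipseFn p q D z ∧ 0 ≤ ellipseFn q p D z}

lemma smul_mem_ellipseCone {p q : F} {D c : ℝ} (hc : 0 ≤ c) {z : F}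
    (hz : z ∈ ellipseCone p q D) : c • z ∈ ellipseCone p q D := by
  simp only [ellipseCone, mem_ofPred_eq, ellipseFn_smul _ _ _ hc]
  exact ⟨mul_nonneg hc hz.1, mul_nonneg hc hz.2⟩

lemma add_mem_ellipseCone {p q : F} {D : ℝ} (hD : 0 ≤ Real.sin D) {x y : F}
    (hx : x ∈ ellipseCone p q D) (hy : y ∈ ellipseCone p q D) : x + y ∈ ellipseCone p q D :=
  ⟨(add_nonneg hx.1 hy.1).trans (ellipseFn_add_le p q hD x y),
    (add_nonneg hx.2 hy.2).trans (ellipseFn_add_le q p hD x y)⟩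

end InnerProductSpace

def sphEllipse (p q : E3) (D : ℝ) : Set E3 :=
  {x ∈ sphere (0 : E3) 1 | sphDist p x + sphDist x q ≤ D}

section Sphere

variable {p q x z : E3} {D : ℝ}

lemma sphDist_comm (x y : E3) : sphDist x y = sphDist y x := by
  rw [sphDist, sphDist, real_inner_comm]

lemma cos_sphDist (hp : ‖p‖ = 1) (hz : ‖z‖ = 1) : Real.cos (sphDist p z) = ⟪p, z⟫ :=
  Real.cos_arccos (neg_one_le_real_inner_of_norm_eq_one hp hz)
    (real_inner_le_one_of_norm_eq_one hp hz)

lemma sin_sphDist (hp : ‖p‖ = 1) (hz : ‖z‖ = 1) :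
    Real.sin (sphDist p z) = ‖z - ⟪p, z⟫ • p‖ := by
  rw [sphDist, Real.sin_arccos, norm_sub_inner_smul_eq_sqrt hp hz]

lemma ellipseFn_eq_cos_sub_cos (hp : ‖p‖ = 1) (hq : ‖q‖ = 1) (hz : ‖z‖ = 1) :
    ellipseFn p q D z = Real.cos (sphDist q z) - Real.cos (D - sphDist p z) := by
  rw [Real.cos_sub, cos_sphDist hp hz, sin_sphDist hp hz, cos_sphDist hq hz, ellipseFn]

lemma ellipseFn_nonneg_iff (hp : ‖p‖ = 1) (hq : ‖q‖ = 1) (hz : ‖z‖ = 1) (hD0 : 0 ≤ D)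
    (hD : D ≤ π) : 0 ≤ ellipseFn p q D z ↔ sphDist q z ≤ |D - sphDist p z| := by
  have h₀ : 0 ≤ sphDist p z := Real.arccos_nonneg _
  have hπ : sphDist p z ≤ π := Real.arccos_le_pi _
  rw [ellipseFn_eq_cos_sub_cos hp hq hz, sub_nonneg, ← Real.cos_abs (D - _)]
  exact Real.strictAntiOn_cos.le_iff_ge
    ⟨abs_nonneg _, abs_le.2 ⟨by linarith, by linarith⟩⟩
    ⟨Real.arccos_nonneg _, Real.arccos_le_pi _⟩

lemma sphEllipse_eq_sphere_inter_ellipseCone (hp : ‖p‖ = 1) (hq : ‖q‖ = 1) (hD0 : 0 < D)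
    (hD : D < π) : sphEllipse p q D = sphere 0 1 ∩ ellipseCone p q D := by
  ext z
  refine and_congr_right fun hz => ?_
  rw [mem_sphere_zero_iff_norm] at hz
  rw [ellipseCone, mem_ofPred_eq, ellipseFn_nonneg_iff hp hq hz hD0.le hD.le,
    ellipseFn_nonneg_iff hq hp hz hD0.le hD.le, sphDist_comm z q]
  exact add_le_iff_le_abs_sub (Real.arccos_nonneg _) (Real.arccos_nonneg _) hD0

lemma sphEllipse_mono {D D' : ℝ} (h : D ≤ D') : sphEllipse p q D ⊆ sphEllipse p q D' :=
  fun _ hx => ⟨hx.1, hx.2.trans h⟩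

lemma sphEllipse_pi (hp : ‖p‖ = 1) (hq : ‖q‖ = 1) :
    sphEllipse p q π = {x ∈ sphere (0 : E3) 1 | 0 ≤ ⟪p + q, x⟫} := by
  ext x
  refine and_congr_right fun hx => ?_
  rw [mem_sphere_zero_iff_norm] at hx
  rw [sphDist, sphDist, Real.arccos_add_arccos_le_pi_iff
    (real_inner_mem_Icc_of_norm_eq_one hp hx) (real_inner_mem_Icc_of_norm_eq_one hx hq),
    inner_add_left, real_inner_comm x q]

lemma inner_add_pos_of_mem_sphEllipse (hD : D < π) (hx : x ∈ sphEllipse p q D) :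
    0 < ⟪p + q, x⟫ := by
  rw [inner_add_left, real_inner_comm x q]
  exact Real.add_pos_of_arccos_add_arccos_lt_pi (hx.2.trans_lt hD)

lemma sphSeg_subset_sphere_inter {C : Set E3} (hadd : ∀ x ∈ C, ∀ y ∈ C, x + y ∈ C)
    (hsmul : ∀ c : ℝ, 0 ≤ c → ∀ x ∈ C, c • x ∈ C) {x y : E3} (hx : x ∈ C) (hy : y ∈ C) :
    sphSeg x y ⊆ sphere 0 1 ∩ C := by
  rintro _ ⟨a, b, ha, hb, hab, rfl⟩
  exact ⟨mem_sphere_zero_iff_norm.2 (norm_smul_inv_norm hab),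
    hsmul _ (by positivity) _ (hadd _ (hsmul a ha x hx) _ (hsmul b hb y hy))⟩

lemma not_sphConvex_of_neg_mem {K : Set E3} (hx : x ∈ K) (hnx : -x ∈ K) : ¬SphConvex K := by
  rintro ⟨-, ⟨e, -, he⟩, -⟩
  have := he (-x) hnx
  rw [inner_neg_right] at this
  linarith [he x hx]

lemma sphConvex_sphEllipse (hp : ‖p‖ = 1) (hq : ‖q‖ = 1) (hD0 : 0 < D) (hD : D < π) :
    SphConvex (sphEllipse p q D) := by
  have hsin : 0 ≤ Real.sin D := Real.sin_nonneg_of_nonneg_of_le_pi hD0.le hD.le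
  have hpos : ∀ x ∈ sphEllipse p q D, 0 < ⟪p + q, x⟫ :=
    fun _ => inner_add_pos_of_mem_sphEllipse hD
  rw [sphEllipse_eq_sphere_inter_ellipseCone hp hq hD0 hD] at hpos ⊢
  refine ⟨inter_subset_left, exists_norm_eq_one_forall_inner_pos hpos, fun x hx y hy _ => ?_⟩
  exact sphSeg_subset_sphere_inter (fun _ hx _ hy => add_mem_ellipseCone hsin hx hy)
    (fun _ hc _ hx => smul_mem_ellipseCone hc hx) hx.2 hy.2

lemma not_sphConvex_sphEllipse (hp : ‖p‖ = 1) (hq : ‖q‖ = 1) (hD : π ≤ D) :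
    ¬SphConvex (sphEllipse p q D) := by
  obtain ⟨x, hx, hpx⟩ :=
    exists_norm_eq_one_inner_eq_zero (by simp : 1 < Module.finrank ℝ E3) (p + q)
  have hmem : ∀ y : E3, ‖y‖ = 1 → ⟪p + q, y⟫ = 0 → y ∈ sphEllipse p q D := fun y hy h0 =>
    sphEllipse_mono hD (by rw [sphEllipse_pi hp hq]; exact ⟨by simpa using hy, h0.ge⟩)
  exact not_sphConvex_of_neg_mem (hmem x hx hpx) (hmem (-x) (by simpa) (by simp [hpx]))

end Sphere

theorem spherical_ellipse_convex_iff_general (p q : E3) (hp : ‖p‖ = 1) (hq : ‖q‖ = 1)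
    (D : ℝ) (hD0 : 0 < D) :
    (SphConvex {x ∈ sphere (0 : E3) 1 | sphDist p x + sphDist x q ≤ D} ↔ D < π) ∧
    (D = π → {x ∈ sphere (0 : E3) 1 | sphDist p x + sphDist x q ≤ D}
      = {x ∈ sphere (0 : E3) 1 | 0 ≤ ⟪x, ‖p + q‖⁻¹ • (p + q)⟫}) := by
  refine ⟨⟨fun hconv => ?_, sphConvex_sphEllipse hp hq hD0⟩, ?_⟩
  · by_contra! hD
    exact not_sphConvex_sphEllipse hp hq hD hconv
  · rintro rfl
    simp_rw [inner_inv_norm_smul_nonneg_iff]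
    exact sphEllipse_pi hp hq

/-- For distinct non-antipodal `p,q ∈ S²` and `0 < D < 2π`, the
spherical ellipse `E = {x : d_s(p,x) + d_s(x,q) ≤ D}` is spherically convex iff
`D < π`; and for `D = π` it is the closed hemisphere centered at the midpoint of
`[p,q]_s`. -/
theorem spherical_ellipse_convex_iff (p q : E3) (hp : ‖p‖ = 1) (hq : ‖q‖ = 1)
    (hne : p ≠ q) (hna : p ≠ -q) (D : ℝ) (hD0 : 0 < D) (hD2 : D < 2 * π) :
    (SphConvex {x ∈ sphere (0 : E3) 1 | sphDist p x + sphDist x q ≤ D} ↔ D < π) ∧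
    (D = π → {x ∈ sphere (0 : E3) 1 | sphDist p x + sphDist x q ≤ D}
      = {x ∈ sphere (0 : E3) 1 | 0 ≤ ⟪x, ‖p + q‖⁻¹ • (p + q)⟫}) :=
  spherical_ellipse_convex_iff_general p q hp hq D hD0
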